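/- Let δ ∈ (0,2) and β > 0, and let L : ℝ → ℝ be a measurable function satisfying |L(θ)| ≤ β·exp(|θ|^{2−δ}) for all θ ∈ ℝ. Then for every σ > 0 the Gaussian smoothed loss L_σ is differentiable at every θ ∈ ℝ and its derivative is given by the score-function identity L_σ′(θ) = (1/σ²)·E_{ε ~ N(0,σ²)}[ε·L(θ + ε)]. -/

import Mathlib

open MeasureTheory ProbabilityTheory Real

open scoped NNReal ENNReal

lemma aux_rpow_le (δ a : ℝ) (hδ1 : 0 < δ) (hδ2 : δ < 2) (ha : 0 < a) (x : ℝ) :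
    |x| ^ (2 - δ) ≤ a * x ^ 2 + (a ^ (-1/δ)) ^ (2 - δ) := by
  set R := a ^ (-1/δ) with hR
  have hRpos : 0 < R := Real.rpow_pos_of_pos ha _
  rcases le_or_gt |x| R with h | h
  · have h1 : |x| ^ (2 - δ) ≤ R ^ (2 - δ) :=
      Real.rpow_le_rpow (abs_nonneg x) h (by linarith)
    nlinarith [mul_nonneg ha.le (sq_nonneg x)]
  · have hx : 0 < |x| := hRpos.trans h
    have h1 : |x| ^ (2 - δ) = x ^ 2 * |x| ^ (-δ) := by
      rw [show (2 - δ) = 2 + (-δ) by ring, Real.rpow_add hx,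
        show ((2:ℝ) = ((2:ℕ):ℝ)) by norm_num, Real.rpow_natCast, sq_abs]
    have h2 : |x| ^ (-δ) ≤ R ^ (-δ) := by
      rw [Real.rpow_neg hx.le, Real.rpow_neg hRpos.le]
      exact inv_anti₀ (Real.rpow_pos_of_pos hRpos _)
        (Real.rpow_le_rpow hRpos.le h.le hδ1.le)
    have h3 : R ^ (-δ) = a := by
      rw [hR, ← Real.rpow_mul ha.le, show (-1/δ) * (-δ) = 1 from by field_simp]
      exact Real.rpow_one a
    have h4 : (0:ℝ) ≤ R ^ (2 - δ) := Real.rpow_nonneg hRpos.le _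
    nlinarith [sq_nonneg x, h1, h2, h3, h4, Real.rpow_nonneg hx.le (-δ)]

lemma aux_exponent (σ θ t x a C₀ : ℝ) (hσ : 0 < σ) (hA : a = (16*σ^2)⁻¹)
    (ht : (t - θ)^2 ≤ 1) :
    a * x^2 + C₀ + -(x - t)^2/(2*σ^2)
      ≤ (C₀ + θ^2/(8*σ^2) + (2*σ^2)⁻¹) + -((8*σ^2)⁻¹ * (x - θ)^2) := by
  subst hA
  have hs : (0:ℝ) < σ^2 := by positivity
  have hQ : x^2/16 + (x-θ)^2/8 - ((x-t)^2/2 + θ^2/8 + 1/2) ≤ 0 := by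
    nlinarith [sq_nonneg (x - 2*θ), sq_nonneg (x - 2*t + θ)]
  have key : (16*σ^2)⁻¹ * x^2 + C₀ + -(x - t)^2/(2*σ^2)
      - ((C₀ + θ^2/(8*σ^2) + (2*σ^2)⁻¹) + -((8*σ^2)⁻¹ * (x - θ)^2))
      = (σ^2)⁻¹ * (x^2/16 + (x-θ)^2/8 - ((x-t)^2/2 + θ^2/8 + 1/2)) := by
    field_simp
    ring
  have h2 : (σ^2)⁻¹ * (x^2/16 + (x-θ)^2/8 - ((x-t)^2/2 + θ^2/8 + 1/2)) ≤ 0 :=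
    mul_nonpos_of_nonneg_of_nonpos (inv_nonneg.mpr hs.le) hQ
  linarith [key, h2]

lemma aux_integrable (b θ : ℝ) (hb : 0 < b) :
    Integrable (fun x : ℝ => (|x - θ| + 1) * Real.exp (-(b * (x - θ)^2))) := by
  have ha : Integrable (fun y : ℝ => |y| * Real.exp (-b * y^2)) := by
    refine (integrable_mul_exp_neg_mul_sq hb).abs.congr (Filter.Eventually.of_forall fun y => ?_)
    show |y * Real.exp (-b * y ^ 2)| = _
    rw [abs_mul, abs_of_pos (Real.exp_pos _)]
  have hb' := integrable_exp_neg_mul_sq hb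
  have h1 : Integrable (fun y : ℝ => (|y| + 1) * Real.exp (-(b * y^2))) := by
    have := ha.add hb'
    refine this.congr (Filter.Eventually.of_forall fun y => ?_)
    simp only [Pi.add_apply, neg_mul]
    ring
  exact h1.comp_sub_right θ

lemma aux_repr (f : ℝ → ℝ) (hf : Measurable f) (t : ℝ) (v : ℝ≥0) (hv : v ≠ 0) :
    ∫ ε, f (t + ε) ∂(gaussianReal 0 v) = ∫ x, f x * gaussianPDFReal t v x := by
  have hmap : (gaussianReal 0 v).map (fun x => t + x) = gaussianReal t v := by
    have h := gaussianReal_map_const_add (μ := (0:ℝ)) (v := v) t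
    simpa using h
  have h1 : ∫ ε, f (t + ε) ∂(gaussianReal 0 v)
      = ∫ x, f x ∂((gaussianReal 0 v).map (fun x => t + x)) :=
    (integral_map (by fun_prop) hf.aestronglyMeasurable).symm
  rw [h1, hmap, gaussianReal_of_var_ne_zero _ hv]
  have h2 : gaussianPDF t v = fun x => ((gaussianPDFReal t v x).toNNReal : ℝ≥0∞) := rfl
  rw [h2, integral_withDensity_eq_integral_smul
    ((measurable_gaussianPDFReal t v).real_toNNReal) f]
  congr 1; funext x
  rw [NNReal.smul_def, smul_eq_mul, Real.coe_toNNReal _ (gaussianPDFReal_nonneg _ _ _), mul_comm]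

lemma aux_pdf_deriv (σ : ℝ) (hσ : 0 < σ) (x t : ℝ) :
    HasDerivAt (fun t => gaussianPDFReal t ⟨σ^2, sq_nonneg σ⟩ x)
      ((x - t) / σ^2 * gaussianPDFReal t ⟨σ^2, sq_nonneg σ⟩ x) t := by
  have hs : (σ:ℝ)^2 ≠ 0 := by positivity
  have hpdf : ∀ s : ℝ, gaussianPDFReal s ⟨σ^2, sq_nonneg σ⟩ x
      = (Real.sqrt (2 * π * σ^2))⁻¹ * Real.exp (-(x - s)^2 / (2*σ^2)) := fun s => rfl
  have h0 : HasDerivAt (fun s : ℝ => x - s) (-1) t := (hasDerivAt_id t).const_sub x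
  have h1 : HasDerivAt (fun s : ℝ => -(x - s)^2 / (2*σ^2)) ((x - t)/σ^2) t := by
    have := ((h0.pow 2).neg).div_const (2*σ^2)
    refine this.congr_deriv ?_
    field_simp
    ring
  have h2 := HasDerivAt.const_mul ((Real.sqrt (2 * π * σ^2))⁻¹) h1.exp
  simp only [hpdf]
  refine h2.congr_deriv ?_
  ring

lemma aux_ptwise (σ θ t x a C₀ c β ℓ : ℝ) (hσ : 0 < σ) (hβ : 0 < β)
    (ha_def : a = (16*σ^2)⁻¹) (hc_pos : 0 < c) (hℓ0 : 0 ≤ ℓ)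
    (hℓ : ℓ ≤ β * Real.exp (a * x^2 + C₀)) (ht : (t - θ)^2 ≤ 1) :
    ℓ * (|x - t| / σ^2 * (c * Real.exp (-(x - t)^2 / (2*σ^2))))
      ≤ (β * c * (σ^2)⁻¹ * Real.exp (C₀ + θ^2/(8*σ^2) + (2*σ^2)⁻¹)) *
        ((|x - θ| + 1) * Real.exp (-((8*σ^2)⁻¹ * (x - θ)^2))) := by
  have hs2 : (0:ℝ) < σ^2 := by positivity
  have hE : (0:ℝ) < Real.exp (-(x - t)^2 / (2*σ^2)) := Real.exp_pos _
  have habs_t : |x - t| ≤ |x - θ| + 1 := by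
    have h1 : |t - θ| ≤ 1 := by nlinarith [abs_nonneg (t - θ), sq_abs (t - θ)]
    calc |x - t| ≤ |x - θ| + |θ - t| := abs_sub_le x θ t
      _ ≤ |x - θ| + 1 := by
          have h2 : |θ - t| = |t - θ| := abs_sub_comm θ t
          linarith
  calc ℓ * (|x - t| / σ^2 * (c * Real.exp (-(x - t)^2 / (2*σ^2))))
      ≤ (β * Real.exp (a * x^2 + C₀)) *
          ((|x - θ| + 1) / σ^2 * (c * Real.exp (-(x - t)^2 / (2*σ^2)))) := by
        refine mul_le_mul hℓ ?_ ?_ (by positivity)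
        · refine mul_le_mul_of_nonneg_right ?_ (mul_nonneg hc_pos.le hE.le)
          gcongr
        · exact mul_nonneg (div_nonneg (abs_nonneg _) hs2.le)
            (mul_nonneg hc_pos.le hE.le)
    _ = β * c * (σ^2)⁻¹ *
          ((|x - θ| + 1) * Real.exp ((a * x^2 + C₀) + -(x - t)^2/(2*σ^2))) := by
        rw [Real.exp_add (a * x^2 + C₀) (-(x - t)^2/(2*σ^2))]
        ring
    _ ≤ β * c * (σ^2)⁻¹ *
          ((|x - θ| + 1) * Real.exp ((C₀ + θ^2/(8*σ^2) + (2*σ^2)⁻¹)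
              + -((8*σ^2)⁻¹ * (x - θ)^2))) := by
        refine mul_le_mul_of_nonneg_left (mul_le_mul_of_nonneg_left
          (Real.exp_le_exp.mpr (aux_exponent σ θ t x a C₀ hσ ha_def ht)) ?_) ?_
        · positivity
        · exact mul_nonneg (mul_nonneg hβ.le hc_pos.le) (inv_nonneg.mpr hs2.le)
    _ = (β * c * (σ^2)⁻¹ * Real.exp (C₀ + θ^2/(8*σ^2) + (2*σ^2)⁻¹)) *
        ((|x - θ| + 1) * Real.exp (-((8*σ^2)⁻¹ * (x - θ)^2))) := by
        rw [Real.exp_add (C₀ + θ^2/(8*σ^2) + (2*σ^2)⁻¹) (-((8*σ^2)⁻¹ * (x - θ)^2))]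
        ring

lemma aux_ptwise2 (σ θ x a C₀ c β ℓ : ℝ) (hσ : 0 < σ) (hβ : 0 < β)
    (ha_def : a = (16*σ^2)⁻¹) (hc_pos : 0 < c)
    (hℓ : ℓ ≤ β * Real.exp (a * x^2 + C₀)) :
    ℓ * (c * Real.exp (-(x - θ)^2 / (2*σ^2)))
      ≤ (β * c * Real.exp (C₀ + θ^2/(8*σ^2) + (2*σ^2)⁻¹)) *
        Real.exp (-((8*σ^2)⁻¹ * (x - θ)^2)) := by
  have hE : (0:ℝ) < Real.exp (-(x - θ)^2 / (2*σ^2)) := Real.exp_pos _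
  calc ℓ * (c * Real.exp (-(x - θ)^2 / (2*σ^2)))
      ≤ (β * Real.exp (a * x^2 + C₀)) * (c * Real.exp (-(x - θ)^2 / (2*σ^2))) :=
        mul_le_mul_of_nonneg_right hℓ (mul_nonneg hc_pos.le hE.le)
    _ = β * c * Real.exp ((a * x^2 + C₀) + -(x - θ)^2/(2*σ^2)) := by
        rw [Real.exp_add (a * x^2 + C₀) (-(x - θ)^2/(2*σ^2))]
        ring
    _ ≤ β * c * Real.exp ((C₀ + θ^2/(8*σ^2) + (2*σ^2)⁻¹)
          + -((8*σ^2)⁻¹ * (x - θ)^2)) := by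
        refine mul_le_mul_of_nonneg_left (Real.exp_le_exp.mpr
          (aux_exponent σ θ θ x a C₀ hσ ha_def (by norm_num))) ?_
        exact mul_nonneg hβ.le hc_pos.le
    _ = (β * c * Real.exp (C₀ + θ^2/(8*σ^2) + (2*σ^2)⁻¹)) *
        Real.exp (-((8*σ^2)⁻¹ * (x - θ)^2)) := by
        rw [Real.exp_add (C₀ + θ^2/(8*σ^2) + (2*σ^2)⁻¹) (-((8*σ^2)⁻¹ * (x - θ)^2))]
        ring

/-- The Gaussian smoothing `L_σ(θ) = E_{ε ~ N(0,σ²)}[L (θ + ε)]` of a loss `L`. -/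
noncomputable def gaussianSmoothing (L : ℝ → ℝ) (σ θ : ℝ) : ℝ :=
  ∫ ε, L (θ + ε) ∂(gaussianReal 0 ⟨σ ^ 2, sq_nonneg σ⟩)

/-- Under the growth bound, the Gaussian smoothed loss `L_σ` is
differentiable at every `θ` with derivative given by the score-function identity
`L_σ′(θ) = (1/σ²) · E_{ε ~ N(0,σ²)}[ε · L(θ + ε)]`. -/
theorem gaussian_smoothing_hasDerivAt_score
    (δ β : ℝ) (hδ : δ ∈ Set.Ioo (0 : ℝ) 2) (hβ : 0 < β)
    (L : ℝ → ℝ) (hL : Measurable L)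
    (hgrowth : ∀ θ : ℝ, |L θ| ≤ β * Real.exp (|θ| ^ (2 - δ)))
    (σ : ℝ) (hσ : 0 < σ) (θ : ℝ) :
    HasDerivAt (fun t : ℝ => gaussianSmoothing L σ t)
      ((1 / σ ^ 2) * ∫ ε, ε * L (θ + ε) ∂(gaussianReal 0 ⟨σ ^ 2, sq_nonneg σ⟩)) θ := by
  obtain ⟨hδ1, hδ2⟩ := hδ
  have hs2 : (0:ℝ) < σ^2 := by positivity
  set v : ℝ≥0 := ⟨σ ^ 2, sq_nonneg σ⟩ with hv_def
  have hv : v ≠ 0 := fun h => hs2.ne' (congrArg NNReal.toReal h)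
  obtain ⟨c, hc_def⟩ : ∃ c : ℝ, c = (Real.sqrt (2 * π * σ^2))⁻¹ := ⟨_, rfl⟩
  have hc_pos : 0 < c := by
    rw [hc_def]
    exact inv_pos.mpr (Real.sqrt_pos.mpr (by positivity))
  have hpdf_eq : ∀ t x : ℝ, gaussianPDFReal t v x
      = c * Real.exp (-(x - t)^2 / (2*σ^2)) := by
    intro t x
    rw [hc_def]
    rfl
  obtain ⟨a, ha_def⟩ : ∃ a : ℝ, a = (16*σ^2)⁻¹ := ⟨_, rfl⟩
  have ha : 0 < a := by rw [ha_def]; positivity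
  obtain ⟨C₀, hC_def⟩ : ∃ C₀ : ℝ, C₀ = (a ^ (-1/δ)) ^ (2 - δ) := ⟨_, rfl⟩
  have hL' : ∀ x, |L x| ≤ β * Real.exp (a * x^2 + C₀) := by
    intro x
    refine (hgrowth x).trans ?_
    rw [hC_def]
    exact mul_le_mul_of_nonneg_left
      (Real.exp_le_exp.mpr (aux_rpow_le δ a hδ1 hδ2 ha x)) hβ.le
  set F' : ℝ → ℝ → ℝ := fun t x => L x * ((x - t) / σ^2 * gaussianPDFReal t v x) with hF'
  obtain ⟨K, hK⟩ : ∃ K : ℝ,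
      K = β * c * (σ^2)⁻¹ * Real.exp (C₀ + θ^2/(8*σ^2) + (2*σ^2)⁻¹) := ⟨_, rfl⟩
  set bound : ℝ → ℝ :=
    fun x => K * ((|x - θ| + 1) * Real.exp (-((8*σ^2)⁻¹ * (x - θ)^2))) with hbound
  have hptwise : ∀ t, (t - θ)^2 ≤ 1 → ∀ x, ‖F' t x‖ ≤ bound x := by
    intro t ht x
    have hpdf_nonneg := gaussianPDFReal_nonneg t v x
    have h1 : ‖F' t x‖ = |L x| * (|x - t| / σ^2 * gaussianPDFReal t v x) := by
      rw [hF']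
      simp only [Real.norm_eq_abs, abs_mul, abs_div, abs_of_nonneg hpdf_nonneg,
        abs_of_pos hs2]
    rw [h1, hpdf_eq t x, hbound, hK]
    exact aux_ptwise σ θ t x a C₀ c β (|L x|) hσ hβ ha_def hc_pos (abs_nonneg _)
      (hL' x) ht
  have hbound_int : Integrable bound :=
    (aux_integrable ((8*σ^2)⁻¹) θ (by positivity)).const_mul K
  have hF_meas : ∀ᶠ t in nhds θ, AEStronglyMeasurable (fun x => L x * gaussianPDFReal t v x)
      (volume : Measure ℝ) :=
    Filter.Eventually.of_forall fun t =>
      (hL.mul (measurable_gaussianPDFReal t v)).aestronglyMeasurable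
  have hF'_meas : AEStronglyMeasurable (F' θ) (volume : Measure ℝ) := by
    rw [hF']
    exact (hL.mul (((measurable_id.sub_const θ).div_const _).mul
      (measurable_gaussianPDFReal θ v))).aestronglyMeasurable
  have hF_int : Integrable (fun x => L x * gaussianPDFReal θ v x) := by
    have hb8 : (0:ℝ) < (8*σ^2)⁻¹ := by positivity
    have hint : Integrable (fun x : ℝ =>
        (β * c * Real.exp (C₀ + θ^2/(8*σ^2) + (2*σ^2)⁻¹)) *
        Real.exp (-((8*σ^2)⁻¹ * (x - θ)^2))) := by
      have h0 := ((integrable_exp_neg_mul_sq hb8).comp_sub_right θ).const_mul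
        (β * c * Real.exp (C₀ + θ^2/(8*σ^2) + (2*σ^2)⁻¹))
      refine h0.congr (Filter.Eventually.of_forall fun x => ?_)
      simp only [neg_mul]
    refine hint.mono ((hL.mul (measurable_gaussianPDFReal θ v)).aestronglyMeasurable)
      (Filter.Eventually.of_forall fun x => ?_)
    have hpdf_nonneg := gaussianPDFReal_nonneg θ v x
    rw [Real.norm_eq_abs, Real.norm_eq_abs, abs_mul, abs_of_nonneg hpdf_nonneg]
    calc |L x| * gaussianPDFReal θ v x
        ≤ (β * c * Real.exp (C₀ + θ^2/(8*σ^2) + (2*σ^2)⁻¹)) *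
            Real.exp (-((8*σ^2)⁻¹ * (x - θ)^2)) := by
          rw [hpdf_eq θ x]
          exact aux_ptwise2 σ θ x a C₀ c β (|L x|) hσ hβ ha_def hc_pos (hL' x)
      _ ≤ |(β * c * Real.exp (C₀ + θ^2/(8*σ^2) + (2*σ^2)⁻¹)) *
            Real.exp (-((8*σ^2)⁻¹ * (x - θ)^2))| := le_abs_self _
  have h_bound : ∀ᵐ x : ℝ, ∀ t ∈ Metric.ball θ 1, ‖F' t x‖ ≤ bound x := by
    refine Filter.Eventually.of_forall fun x t ht => ?_
    have h1 : |t - θ| < 1 := by rwa [Metric.mem_ball, Real.dist_eq] at ht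
    exact hptwise t (by nlinarith [abs_nonneg (t - θ), sq_abs (t - θ)]) x
  have h_diff : ∀ᵐ x : ℝ, ∀ t ∈ Metric.ball θ 1,
      HasDerivAt (fun t => L x * gaussianPDFReal t v x) (F' t x) t :=
    Filter.Eventually.of_forall fun x t _ =>
      HasDerivAt.const_mul (L x) (aux_pdf_deriv σ hσ x t)
  have main := hasDerivAt_integral_of_dominated_loc_of_deriv_le
    (F := fun t x => L x * gaussianPDFReal t v x) (F' := F') (x₀ := θ)
    (bound := bound) (Metric.ball_mem_nhds θ one_pos) hF_meas hF_int hF'_meas h_bound hbound_int h_diff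
  have hrepr : ∀ t, gaussianSmoothing L σ t = ∫ x, L x * gaussianPDFReal t v x := by
    intro t
    simp only [gaussianSmoothing]
    exact aux_repr L hL t v hv
  have h2 : (1 / σ ^ 2) * ∫ ε, ε * L (θ + ε) ∂(gaussianReal 0 v) = ∫ x, F' θ x := by
    have hr := aux_repr (fun y => (y - θ) * L y)
      ((measurable_id.sub_const θ).mul hL) θ v hv
    simp only [add_sub_cancel_left] at hr
    rw [hr, ← integral_const_mul]
    congr 1
    funext x
    rw [hF']
    field_simp
  rw [show (fun t : ℝ => gaussianSmoothing L σ t)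
    = fun t => ∫ x, L x * gaussianPDFReal t v x from funext hrepr, h2]
  exact main.2
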